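/- In the game G' where at least one clause player plays Out in a given ε-WSNE, iterated propagation forces all players to play Out: any variable player adjacent to a clause player playing Out must play Out, and any clause player adjacent to a variable player playing Out must play Out; hence if the interaction graph is connected and one player plays Out, all players play Out. -/

import Mathlib

/-!
Out is a strict ε-best response on both sides of an edge whose other endpoint plays Out, so
no non-Out strategy can be in the support of an ε-WSNE there.  A variable player earns exactly
`1/3` per occurrence from Out, i.e. `1` in total, while a Boolean strategy earns nothing on the
edge to an Out clause and at most `1/3 - ε/3` on its two other edges.  A clause player earns `1`
from Out, while a non-Out strategy earns nothing on the edge to an Out variable and at most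
`κ + cc κ` on the remaining two, which falls short of `1 - ε = κ (1 + 2 cc)` by `cc κ > 0`.
Connectivity then spreads Out along the interaction graph.
-/

namespace Stmt8

/-- A monotone cubic formula with exactly three distinct variables per clause. -/
structure CubicFormula (V C : Type) where
  var : C → Fin 3 → V
  inj : ∀ c, Function.Injective (var c)

variable {V C : Type} [Fintype V] [Fintype C] [DecidableEq V] [DecidableEq C]

/-- α is a 1-in-3 satisfying assignment: exactly one variable per clause is true. -/
def OneInThree (F : CubicFormula V C) (α : V → Bool) : Prop :=
  ∀ c : C, (Finset.univ.filter (fun j : Fin 3 => α (F.var c j) = true)).card = 1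

/-- Each variable occurs in exactly three clause positions (the formula is cubic). -/
def Cubic (F : CubicFormula V C) : Prop :=
  ∀ v : V, (Finset.univ.filter (fun cj : C × Fin 3 => F.var cj.1 cj.2 = v)).card = 3

/-- The bipartite interaction graph between variable players and clause players. -/
def interactionGraph (F : CubicFormula V C) : SimpleGraph (V ⊕ C) :=
  SimpleGraph.fromRel (fun a b =>
    match a, b with
    | Sum.inl v, Sum.inr c => ∃ j, F.var c j = v
    | _, _ => False)

/-- Payoff to clause player `c_j` on the edge with its `j`-th variable, when the clause
plays `s` (`none` = Out) and the variable plays `b` (`none` = Out). -/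
noncomputable def edgeClausePay (cc κ : ℝ) (j : Fin 3) (s : Option (Fin 3)) (b : Option Bool) : ℝ :=
  match s, b with
  | none, _ => 1 / 3
  | some t, some true => if t = j then κ else 0
  | some _, some false => cc * κ
  | some _, none => 0

/-- Payoff to the variable player on the edge where it is the `j`-th variable of a
clause playing `s`, when the variable plays `b` (`none` = Out). -/
noncomputable def edgeVarPay (ε : ℝ) (j : Fin 3) (s : Option (Fin 3)) (b : Option Bool) : ℝ :=
  match b, s with
  | none, _ => 1 / 3
  | some true, s => if s = some j then 1 / 3 - ε / 3 else 0
  | some false, some t => if t = j then 0 else 1 / 3 - ε / 3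
  | some false, none => 0

/-- Payoff of clause player `c` for pure strategy `s`, against the variable players'
mixed strategies `p`. -/
noncomputable def clausePure (F : CubicFormula V C) (cc κ : ℝ) (p : V → Option Bool → ℝ) (c : C)
    (s : Option (Fin 3)) : ℝ :=
  ∑ j : Fin 3, ∑ b : Option Bool, p (F.var c j) b * edgeClausePay cc κ j s b

/-- Payoff of variable player `v` for pure strategy `b`, against the clause players'
mixed strategies `q`. -/
noncomputable def varPure (F : CubicFormula V C) (ε : ℝ) (q : C → Option (Fin 3) → ℝ) (v : V)
    (b : Option Bool) : ℝ :=
  ∑ c : C, ∑ j : Fin 3, ∑ s : Option (Fin 3),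
    (if F.var c j = v then q c s * edgeVarPay ε j s b else 0)

/-- A valid mixed strategy profile of the game G'. -/
def IsProfile (p : V → Option Bool → ℝ) (q : C → Option (Fin 3) → ℝ) : Prop :=
  (∀ v b, 0 ≤ p v b) ∧ (∀ v, ∑ b, p v b = 1) ∧
  (∀ c s, 0 ≤ q c s) ∧ (∀ c, ∑ s, q c s = 1)

/-- An ε-well-supported Nash equilibrium of G': every pure strategy played with
positive probability is an ε-best response. -/
def IsWSNE (F : CubicFormula V C) (ε cc κ : ℝ) (p : V → Option Bool → ℝ)
    (q : C → Option (Fin 3) → ℝ) : Prop :=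
  IsProfile p q ∧
  (∀ v b, 0 < p v b → ∀ b', varPure F ε q v b ≥ varPure F ε q v b' - ε) ∧
  (∀ c s, 0 < q c s → ∀ s', clausePure F cc κ p c s ≥ clausePure F cc κ p c s' - ε)

end Stmt8

open Finset

section ProbabilityVector

variable {ι : Type*} [Fintype ι] {w : ι → ℝ}

lemma eq_zero_of_sum_eq_one_of_eq_one (hw0 : ∀ i, 0 ≤ w i) (hw1 : ∑ i, w i = 1) {i j : ι}
    (hi : w i = 1) (hji : j ≠ i) : w j = 0 := by
  classical
  have hrest : ∑ k ∈ univ.erase i, w k = 0 := by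
    rw [sum_erase_eq_sub (mem_univ i), hw1, hi, sub_self]
  exact (sum_eq_zero_iff_of_nonneg fun k _ => hw0 k).1 hrest j (mem_erase.2 ⟨hji, mem_univ j⟩)

lemma sum_mul_eq_of_eq_one (hw0 : ∀ i, 0 ≤ w i) (hw1 : ∑ i, w i = 1) {i : ι} (hi : w i = 1)
    (g : ι → ℝ) : ∑ j, w j * g j = g i := by
  rw [Fintype.sum_eq_single i fun j hji => by
    rw [eq_zero_of_sum_eq_one_of_eq_one hw0 hw1 hi hji, zero_mul], hi, one_mul]

lemma sum_mul_le_of_le (hw0 : ∀ i, 0 ≤ w i) (hw1 : ∑ i, w i = 1) {g : ι → ℝ} {M : ℝ}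
    (hg : ∀ i, g i ≤ M) : ∑ i, w i * g i ≤ M :=
  calc ∑ i, w i * g i ≤ ∑ i, w i * M :=
        sum_le_sum fun i _ => mul_le_mul_of_nonneg_left (hg i) (hw0 i)
    _ = M := by rw [← sum_mul, hw1, one_mul]

lemma eq_one_of_forall_lt_sub (hw0 : ∀ i, 0 ≤ w i) (hw1 : ∑ i, w i = 1) {u : ι → ℝ} {ε : ℝ}
    {i : ι} (hsupp : ∀ j, 0 < w j → u i - ε ≤ u j) (hdom : ∀ j ≠ i, u j < u i - ε) :
    w i = 1 := by
  have hzero : ∀ j ≠ i, w j = 0 := fun j hji =>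
    (hw0 j).eq_or_lt.elim Eq.symm fun hpos => absurd (hsupp j hpos) (hdom j hji).not_ge
  rwa [Fintype.sum_eq_single i hzero] at hw1

end ProbabilityVector

lemma Finset.sum_le_sum_erase_of_eq_zero {ι : Type*} [DecidableEq ι] {s : Finset ι}
    {f g : ι → ℝ} {i : ι} (hi : i ∈ s) (hfi : f i = 0) (hfg : ∀ j ∈ s, f j ≤ g j) :
    ∑ j ∈ s, f j ≤ ∑ j ∈ s.erase i, g j := by
  rw [← add_sum_erase s f hi, hfi, zero_add]
  exact sum_le_sum fun j hj => hfg j (mem_of_mem_erase hj)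

lemma SimpleGraph.Preconnected.forall_of_adj_imp {V : Type*} {G : SimpleGraph V}
    (hG : G.Preconnected) {P : V → Prop} (hP : ∀ x y, G.Adj x y → P x → P y) {x : V}
    (hx : P x) (y : V) : P y := by
  obtain ⟨w⟩ := hG x y
  induction w with
  | nil => exact hx
  | cons hadj _ ih => exact ih (hP _ _ hadj hx)

namespace Stmt8

variable {V C : Type}

section VariablePlayer

variable [Fintype C] [DecidableEq V]

def occurrences (F : CubicFormula V C) (v : V) : Finset (C × Fin 3) :=
  univ.filter fun cj => F.var cj.1 cj.2 = v

lemma Cubic.card_occurrences {F : CubicFormula V C} (hcub : Cubic F) (v : V) :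
    (occurrences F v).card = 3 :=
  hcub v

lemma varPure_eq_sum_occurrences (F : CubicFormula V C) (ε : ℝ) (q : C → Option (Fin 3) → ℝ)
    (v : V) (b : Option Bool) :
    varPure F ε q v b = ∑ cj ∈ occurrences F v, ∑ s, q cj.1 s * edgeVarPay ε cj.2 s b := by
  rw [varPure, occurrences, sum_filter, ← Fintype.sum_prod_type']
  exact sum_congr rfl fun cj _ => by split_ifs <;> simp

lemma edgeVarPay_some_le {ε : ℝ} (hε : ε ≤ 1) (j : Fin 3) (s : Option (Fin 3)) (b : Bool) :
    edgeVarPay ε j s (some b) ≤ 1 / 3 - ε / 3 := by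
  cases b <;> cases s <;> simp only [edgeVarPay] <;> (try split_ifs) <;> linarith

lemma varPure_none {F : CubicFormula V C} (hcub : Cubic F) (ε : ℝ)
    {q : C → Option (Fin 3) → ℝ} (hq1 : ∀ c, ∑ s, q c s = 1) (v : V) :
    varPure F ε q v none = 1 := by
  have hedge : ∀ c j, ∑ s, q c s * edgeVarPay ε j s none = 1 / 3 := fun c j => by
    simp only [edgeVarPay, ← sum_mul, hq1, one_mul]
  simp only [varPure_eq_sum_occurrences, hedge, sum_const, hcub.card_occurrences]
  norm_num

lemma varPure_some_le_of_clause_out [DecidableEq C] {F : CubicFormula V C} (hcub : Cubic F)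
    {ε : ℝ} (hε : ε ≤ 1) {q : C → Option (Fin 3) → ℝ} (hq0 : ∀ c s, 0 ≤ q c s)
    (hq1 : ∀ c, ∑ s, q c s = 1) {c : C} (hc : q c none = 1) (j : Fin 3) (b : Bool) :
    varPure F ε q (F.var c j) (some b) ≤ 2 / 3 - 2 * ε / 3 := by
  have hmem : (c, j) ∈ occurrences F (F.var c j) := by simp [occurrences]
  have hout : ∑ s, q c s * edgeVarPay ε j s (some b) = 0 := by
    rw [sum_mul_eq_of_eq_one (hq0 c) (hq1 c) hc]
    cases b <;> rfl
  calc varPure F ε q (F.var c j) (some b)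
      ≤ ∑ _cj ∈ (occurrences F (F.var c j)).erase (c, j), (1 / 3 - ε / 3) := by
        rw [varPure_eq_sum_occurrences]
        exact sum_le_sum_erase_of_eq_zero hmem hout fun cj _ =>
          sum_mul_le_of_le (hq0 cj.1) (hq1 cj.1) fun s => edgeVarPay_some_le hε cj.2 s b
    _ = 2 / 3 - 2 * ε / 3 := by
        rw [sum_const, card_erase_of_mem hmem, hcub.card_occurrences]
        norm_num
        ring

end VariablePlayer

section ClausePlayer

variable {cc κ : ℝ}

lemma clausePure_none (F : CubicFormula V C) {p : V → Option Bool → ℝ}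
    (hp1 : ∀ v, ∑ b, p v b = 1) (c : C) : clausePure F cc κ p c none = 1 := by
  simp only [clausePure, edgeClausePay, ← sum_mul, hp1, one_mul, sum_const, card_univ,
    Fintype.card_fin]
  norm_num

lemma edgeClausePay_some_le (hcc0 : 0 ≤ cc) (hcc1 : cc ≤ 1) (hκ : 0 ≤ κ) (j t : Fin 3)
    (b : Option Bool) : edgeClausePay cc κ j (some t) b ≤ if t = j then κ else cc * κ := by
  have hccκ : 0 ≤ cc * κ := mul_nonneg hcc0 hκ
  rcases b with _ | _ | _ <;> simp only [edgeClausePay] <;> split_ifs <;> nlinarith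

lemma clausePure_some_le_of_var_out (F : CubicFormula V C) (hcc0 : 0 ≤ cc) (hcc1 : cc ≤ 1)
    (hκ : 0 ≤ κ) {p : V → Option Bool → ℝ} (hp0 : ∀ v b, 0 ≤ p v b)
    (hp1 : ∀ v, ∑ b, p v b = 1) {c : C} {j : Fin 3} (hv : p (F.var c j) none = 1)
    (t : Fin 3) : clausePure F cc κ p c (some t) ≤ κ + cc * κ := by
  have hout : ∑ b, p (F.var c j) b * edgeClausePay cc κ j (some t) b = 0 :=
    (sum_mul_eq_of_eq_one (hp0 _) (hp1 _) hv _).trans rfl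
  calc clausePure F cc κ p c (some t)
      ≤ ∑ i ∈ univ.erase j, if t = i then κ else cc * κ :=
        sum_le_sum_erase_of_eq_zero (mem_univ j) hout fun i _ =>
          sum_mul_le_of_le (hp0 _) (hp1 _) (edgeClausePay_some_le hcc0 hcc1 hκ i t)
    _ ≤ κ + cc * κ := by
        fin_cases j <;> fin_cases t <;> simp [Fin.sum_univ_three] <;> nlinarith

end ClausePlayer

lemma interactionGraph_adj {F : CubicFormula V C} {x y : V ⊕ C} :
    (interactionGraph F).Adj x y ↔ ∃ c j, x = .inl (F.var c j) ∧ y = .inr c ∨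
      x = .inr c ∧ y = .inl (F.var c j) := by
  rcases x with v | c <;> rcases y with v' | c' <;> simp [interactionGraph, eq_comm]

section Propagation

variable [Fintype C] [DecidableEq V] {F : CubicFormula V C} {ε cc κ : ℝ}
  {p : V → Option Bool → ℝ} {q : C → Option (Fin 3) → ℝ}

lemma IsWSNE.var_out_of_clause_out [DecidableEq C] (hwsne : IsWSNE F ε cc κ p q)
    (hcub : Cubic F) (hε : ε < 1) {c : C} (hc : q c none = 1) (j : Fin 3) :
    p (F.var c j) none = 1 := by
  obtain ⟨⟨hp0, hp1, hq0, hq1⟩, hvar, -⟩ := hwsne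
  refine eq_one_of_forall_lt_sub (hp0 _) (hp1 _) (fun b hb => hvar _ b hb none) fun b hb => ?_
  obtain ⟨b, rfl⟩ := Option.ne_none_iff_exists'.1 hb
  rw [varPure_none hcub ε hq1]
  linarith [varPure_some_le_of_clause_out hcub hε.le hq0 hq1 hc j b]

lemma IsWSNE.clause_out_of_var_out (hwsne : IsWSNE F ε cc κ p q) (hε : ε < 1) (hcc0 : 0 < cc)
    (hcc1 : cc < 1) (hκ : κ = (1 - ε) / (1 + 2 * cc)) {c : C} {j : Fin 3}
    (hv : p (F.var c j) none = 1) : q c none = 1 := by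
  obtain ⟨⟨hp0, hp1, hq0, hq1⟩, -, hclause⟩ := hwsne
  have hκ0 : 0 < κ := hκ ▸ div_pos (by linarith) (by linarith)
  have hκ_mul : κ * (1 + 2 * cc) = 1 - ε := by
    rw [hκ]
    field_simp
  have hgap : κ + cc * κ < 1 - ε := by nlinarith [mul_pos hcc0 hκ0]
  refine eq_one_of_forall_lt_sub (hq0 _) (hq1 _) (fun s hs => hclause c s hs none) fun s hs => ?_
  obtain ⟨t, rfl⟩ := Option.ne_none_iff_exists'.1 hs
  rw [clausePure_none F hp1]
  linarith [clausePure_some_le_of_var_out F hcc0.le hcc1.le hκ0.le hp0 hp1 hv t]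

end Propagation

variable [Fintype V] [Fintype C] [DecidableEq V] [DecidableEq C]

theorem stmt_8_general (F : CubicFormula V C) (hcub : Cubic F)
    (ε cc κ : ℝ) (hε1 : ε < 1)
    (hcc0 : max (1 - 3 * ε / 2) 0 < cc) (hcc1 : cc < 1)
    (hκ : κ = (1 - ε) / (1 + 2 * cc))
    (p : V → Option Bool → ℝ) (q : C → Option (Fin 3) → ℝ)
    (hwsne : IsWSNE F ε cc κ p q) :
    (∀ c j, q c none = 1 → p (F.var c j) none = 1) ∧
    (∀ c j, p (F.var c j) none = 1 → q c none = 1) ∧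
    ((interactionGraph F).Connected →
      ((∃ v, p v none = 1) ∨ (∃ c, q c none = 1)) →
      (∀ v, p v none = 1) ∧ (∀ c, q c none = 1)) := by
  have hcc : 0 < cc := (le_max_right _ _).trans_lt hcc0
  have var_out (c : C) (j : Fin 3) (hc : q c none = 1) : p (F.var c j) none = 1 :=
    hwsne.var_out_of_clause_out hcub hε1 hc j
  have clause_out (c : C) (j : Fin 3) (hv : p (F.var c j) none = 1) : q c none = 1 :=
    hwsne.clause_out_of_var_out hε1 hcc hcc1 hκ hv
  refine ⟨var_out, clause_out, fun hconn hsome => ?_⟩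
  let Out : V ⊕ C → Prop := Sum.elim (p · none = 1) (q · none = 1)
  have hadj : ∀ x y, (interactionGraph F).Adj x y → Out x → Out y := fun x y hxy => by
    obtain ⟨c, j, ⟨rfl, rfl⟩ | ⟨rfl, rfl⟩⟩ := interactionGraph_adj.1 hxy
    exacts [clause_out c j, var_out c j]
  obtain ⟨x, hx⟩ : ∃ x, Out x :=
    hsome.elim (fun ⟨v, hv⟩ => ⟨.inl v, hv⟩) fun ⟨c, hc⟩ => ⟨.inr c, hc⟩
  have hall := hconn.preconnected.forall_of_adj_imp hadj hx
  exact ⟨fun v => hall (.inl v), fun c => hall (.inr c)⟩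

/-- Propagation of Out in any ε-WSNE of G': a variable player adjacent to a clause
player playing Out must play Out, a clause player adjacent to a variable player playing
Out must play Out, and hence, if the interaction graph is connected and some player
plays Out, then all players play Out. -/
theorem stmt_8 (F : CubicFormula V C) (hcub : Cubic F)
    (ε cc κ : ℝ) (hε0 : 0 < ε) (hε1 : ε < 1)
    (hcc0 : max (1 - 3 * ε / 2) 0 < cc) (hcc1 : cc < 1)
    (hκ : κ = (1 - ε) / (1 + 2 * cc))
    (p : V → Option Bool → ℝ) (q : C → Option (Fin 3) → ℝ)
    (hwsne : IsWSNE F ε cc κ p q) :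
    (∀ c j, q c none = 1 → p (F.var c j) none = 1) ∧
    (∀ c j, p (F.var c j) none = 1 → q c none = 1) ∧
    ((interactionGraph F).Connected →
      ((∃ v, p v none = 1) ∨ (∃ c, q c none = 1)) →
      (∀ v, p v none = 1) ∧ (∀ c, q c none = 1)) :=
  stmt_8_general F hcub ε cc κ hε1 hcc0 hcc1 hκ p q hwsne

end Stmt8
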